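/- Let S be a finite nonempty set of positive integers and p : S → ℤ a score function with M = max_{j∈S} |p(j)|. Define G_s : ℕ → ℤ by G_s(0) = 0 and G_s(n) = max_{j ∈ S, j ≤ n} (p(j) - G_s(n - j)) for n > 0 (G_s(n) = 0 if no such j exists). Then |G_s(n)| ≤ 2M for all n ∈ ℕ. -/

import Mathlib

/-!
Since every move is worth at most `M`, `G n ≤ M - min G`, so it suffices to show `-M ≤ G n`.
If `G n < -M`, let `j₁` be a legal move of largest score. Its value `p j₁ - G (n - j₁)` is below
`-M`, so `G (n - j₁) > p j₁ + M ≥ 0`; hence the opponent has an optimal reply `j₂` from `n - j₁`,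
which was already legal from `n`, so `p j₂ ≤ p j₁`. Then
`G (n - j₁ - j₂) = p j₂ - G (n - j₁) < p j₂ - p j₁ - M ≤ -M`, and strong induction rules this out.
-/

def IsOptimalNetScore (S : Finset ℕ) (p Gs : ℕ → ℤ) : Prop :=
  Gs 0 = 0 ∧ ∀ n : ℕ, 0 < n →
    Gs n = if h : (S.filter (fun j => j ≤ n)).Nonempty
      then (S.filter (fun j => j ≤ n)).sup' h (fun j => p j - Gs (n - j))
      else 0

namespace IsOptimalNetScore

variable {S : Finset ℕ} {p Gs : ℕ → ℤ} {n j : ℕ} {M : ℤ}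

theorem pos_of_ne_zero (hG : IsOptimalNetScore S p Gs) (h : Gs n ≠ 0) : 0 < n :=
  Nat.pos_of_ne_zero fun hn => h (hn ▸ hG.1)

theorem sub_le (hG : IsOptimalNetScore S p Gs) (hn : 0 < n) (hj : j ∈ S) (hjn : j ≤ n) :
    p j - Gs (n - j) ≤ Gs n := by
  have hmem : j ∈ S.filter (fun j => j ≤ n) := Finset.mem_filter.mpr ⟨hj, hjn⟩
  rw [hG.2 n hn, dif_pos ⟨j, hmem⟩]
  exact Finset.le_sup' (fun j => p j - Gs (n - j)) hmem

theorem exists_eq_sub_of_ne_zero (hG : IsOptimalNetScore S p Gs) (h : Gs n ≠ 0) :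
    ∃ j ∈ S, j ≤ n ∧ Gs n = p j - Gs (n - j) := by
  have hval := hG.2 n (hG.pos_of_ne_zero h)
  by_cases hA : (S.filter (fun j => j ≤ n)).Nonempty
  · rw [dif_pos hA] at hval
    obtain ⟨j, hj, hjmax⟩ := Finset.exists_mem_eq_sup' hA (fun j => p j - Gs (n - j))
    exact ⟨j, (Finset.mem_filter.mp hj).1, (Finset.mem_filter.mp hj).2, hval.trans hjmax⟩
  · rw [dif_neg hA] at hval
    exact absurd hval h

theorem neg_le (hG : IsOptimalNetScore S p Gs) (hpos : ∀ j ∈ S, 0 < j)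
    (hM : ∀ j ∈ S, |p j| ≤ M) (hM0 : 0 ≤ M) (n : ℕ) : -M ≤ Gs n := by
  induction n using Nat.strong_induction_on with
  | _ n ih =>
    by_contra! hlow
    have hne : Gs n ≠ 0 := by omega
    have hn := hG.pos_of_ne_zero hne
    obtain ⟨j₀, hj₀, hj₀n, -⟩ := hG.exists_eq_sub_of_ne_zero hne
    obtain ⟨j₁, hj₁, hj₁max⟩ :=
      Finset.exists_max_image (S.filter (fun j => j ≤ n)) p ⟨j₀, Finset.mem_filter.mpr ⟨hj₀, hj₀n⟩⟩
    obtain ⟨hj₁S, hj₁n⟩ := Finset.mem_filter.mp hj₁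
    have hreply : p j₁ + M < Gs (n - j₁) := by
      linarith [hG.sub_le hn hj₁S hj₁n]
    have hreply_ne : Gs (n - j₁) ≠ 0 := by
      linarith [neg_abs_le (p j₁), hM j₁ hj₁S]
    obtain ⟨j₂, hj₂S, hj₂n, hj₂eq⟩ := hG.exists_eq_sub_of_ne_zero hreply_ne
    have hp : p j₂ ≤ p j₁ := hj₁max j₂ (Finset.mem_filter.mpr ⟨hj₂S, by omega⟩)
    have hlt : n - j₁ - j₂ < n := by have := hpos j₁ hj₁S; omega
    linarith [ih _ hlt]

theorem abs_le_two_mul (hG : IsOptimalNetScore S p Gs) (hpos : ∀ j ∈ S, 0 < j)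
    (hM : ∀ j ∈ S, |p j| ≤ M) (hM0 : 0 ≤ M) (n : ℕ) : |Gs n| ≤ 2 * M := by
  refine abs_le.mpr ⟨by linarith [hG.neg_le hpos hM hM0 n], ?_⟩
  by_cases hne : Gs n = 0
  · rw [hne]; linarith
  obtain ⟨j, hj, -, hjeq⟩ := hG.exists_eq_sub_of_ne_zero hne
  linarith [le_of_abs_le (hM j hj), hG.neg_le hpos hM hM0 (n - j)]

end IsOptimalNetScore

theorem stmt_12 (S : Finset ℕ) (hS : S.Nonempty) (hpos : ∀ j ∈ S, 0 < j) (p : ℕ → ℤ)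
    (Gs : ℕ → ℤ) (h0 : Gs 0 = 0)
    (hG : ∀ n : ℕ, 0 < n →
      Gs n = if h : (S.filter (fun j => j ≤ n)).Nonempty
        then (S.filter (fun j => j ≤ n)).sup' h (fun j => p j - Gs (n - j))
        else 0) (M : ℤ) (hM : M = S.sup' hS (fun j => |p j|)) :
    ∀ n : ℕ, |Gs n| ≤ 2 * M := by
  have habs : ∀ j ∈ S, |p j| ≤ M := fun j hj => hM ▸ Finset.le_sup' (fun j => |p j|) hj
  obtain ⟨j, hj⟩ := hS
  exact IsOptimalNetScore.abs_le_two_mul ⟨h0, hG⟩ hpos habs ((abs_nonneg _).trans (habs j hj))
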